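/- Stable point condition, noiseless case: Let b = A x* where x* is k-sparse with support Λ, and suppose A_Γ^T A_Γ is invertible for every index set Γ of size k. Fix α̲ > 0 and Γ of size k with Γ ≠ Λ. If there exists an α̲-stable point of the iteration on Γ (i.e., x̄ with supp(x̄) ⊆ Γ, (A^T(b − A x̄))_Γ = 0, and min_{i∈Γ}|x̄_i| ≥ α̲ max_{j∈Γ^C} |(A^T(b − A x̄))_j|), then ‖A_Γ^† A_{Λ∖Γ} x*_{Λ∖Γ}‖ ≥ α̲ ‖A_{Λ∖Γ}^T (I − A_Γ A_Γ^†) A_{Λ∖Γ} x*_{Λ∖Γ}‖. -/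

import Mathlib

/-!
Write `G = A_Γ`, `D = A_{Λ∖Γ}` and `w = x*_{Λ∖Γ}`, so that `b = G x*_Γ + D w`. The normal
equations `Gᵀ (b - G x̄_Γ) = 0` force `x̄_Γ = G^† b = x*_Γ + G^† D w`, hence `G^† D w = x̄_Γ - x*_Γ`
and the residual is `b - A x̄ = (I - G G^†) D w`, so `Dᵀ (I - G G^†) D w` is the gradient
`Aᵀ (b - A x̄)` on `Λ∖Γ`. Since `|Γ| = |Λ|`, the sets `Λ∖Γ` and `Γ∖Λ` have the same
size, and on `Γ∖Λ` the vector `x̄_Γ - x*_Γ` equals `x̄`. Pairing each `j ∈ Λ∖Γ` with a distinct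
`i ∈ Γ∖Λ`, the stability condition bounds `α̲ |(Dᵀ (I - G G^†) D w)_j|` by `|(G^† D w)_i|`;
summing squares gives the claim.
-/

open scoped Classical
open Finset Matrix

/-- Euclidean norm of a finitely indexed real vector. -/
noncomputable def euclNorm {m : Type*} [Fintype m] (x : m → ℝ) : ℝ :=
  Real.sqrt (∑ i, (x i) ^ 2)

/-- The column submatrix of `A` indexed by the finset `Γ`. -/
def colSub {n N : ℕ} (A : Matrix (Fin n) (Fin N) ℝ) (Γ : Finset (Fin N)) :
    Matrix (Fin n) Γ ℝ := fun i j => A i j.1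

/-- The Moore–Penrose pseudoinverse `A_Γ^† = (A_Γᵀ A_Γ)⁻¹ A_Γᵀ`. -/
noncomputable def pinv {n N : ℕ} (A : Matrix (Fin n) (Fin N) ℝ) (Γ : Finset (Fin N)) :
    Matrix Γ (Fin n) ℝ := ((colSub A Γ)ᵀ * colSub A Γ)⁻¹ * (colSub A Γ)ᵀ

lemma mul_euclNorm_le_of_injective {ι κ : Type*} [Fintype ι] [Fintype κ] {c : ℝ} (hc : 0 ≤ c)
    {u : ι → ℝ} {z : κ → ℝ} (f : κ → ι) (hf : Function.Injective f)
    (h : ∀ j, c * |z j| ≤ |u (f j)|) : c * euclNorm z ≤ euclNorm u := by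
  have hsq : c ^ 2 * ∑ j, z j ^ 2 ≤ ∑ i, u i ^ 2 :=
    calc c ^ 2 * ∑ j, z j ^ 2 = ∑ j, (c * |z j|) ^ 2 := by
          simp only [Finset.mul_sum, mul_pow, sq_abs]
      _ ≤ ∑ j, |u (f j)| ^ 2 := by
          gcongr with j
          exact h j
      _ = ∑ i ∈ univ.map ⟨f, hf⟩, u i ^ 2 := by simp only [sq_abs, sum_map]; rfl
      _ ≤ ∑ i, u i ^ 2 :=
          sum_le_sum_of_subset_of_nonneg (subset_univ _) fun i _ _ => sq_nonneg _
  rw [euclNorm, euclNorm, ← Real.sqrt_sq hc, ← Real.sqrt_mul (sq_nonneg c)]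
  exact Real.sqrt_le_sqrt hsq

lemma exists_injective_sdiff_not_mem {α : Type*} [DecidableEq α] {Γ Λ : Finset α}
    (h : Γ.card = Λ.card) :
    ∃ f : ↥(Λ \ Γ) → ↥Γ, Function.Injective f ∧ ∀ j, (f j).1 ∉ Λ := by
  let e : ↥(Λ \ Γ) ≃ ↥(Γ \ Λ) :=
    Fintype.equivOfCardEq (by simpa using card_sdiff_comm h.symm)
  refine ⟨fun j => ⟨e j, (mem_sdiff.mp (e j).2).1⟩, fun j j' hjj' => e.injective ?_,
    fun j => (mem_sdiff.mp (e j).2).2⟩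
  exact Subtype.ext (congrArg Subtype.val hjj' :)

section ColumnSubmatrix

variable {n N : ℕ} (A : Matrix (Fin n) (Fin N) ℝ)

lemma colSub_mulVec_apply (Γ : Finset (Fin N)) (x : Fin N → ℝ) (r : Fin n) :
    (colSub A Γ *ᵥ fun i : ↥Γ => x i) r = ∑ i ∈ Γ, A r i * x i :=
  sum_attach Γ fun i => A r i * x i

lemma transpose_colSub_mulVec (Γ : Finset (Fin N)) (v : Fin n → ℝ) :
    (colSub A Γ)ᵀ *ᵥ v = fun i : ↥Γ => (Aᵀ *ᵥ v) i :=
  rfl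

lemma mulVec_eq_colSub_mulVec {Γ : Finset (Fin N)} {x : Fin N → ℝ}
    (hx : ∀ i ∉ Γ, x i = 0) : A *ᵥ x = colSub A Γ *ᵥ fun i : ↥Γ => x i := by
  funext r
  rw [colSub_mulVec_apply]
  exact (sum_subset (subset_univ Γ) fun i _ hi => by rw [hx i hi, mul_zero]).symm

lemma mulVec_eq_colSub_add_colSub_sdiff {Γ Λ : Finset (Fin N)} {x : Fin N → ℝ}
    (hx : ∀ i ∉ Λ, x i = 0) :
    A *ᵥ x = colSub A Γ *ᵥ (fun i : ↥Γ => x i) + colSub A (Λ \ Γ) *ᵥ fun i => x i := by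
  have hx' : ∀ i ∉ Γ ∪ Λ \ Γ, x i = 0 := fun i hi =>
    hx i fun hiΛ => hi (by rw [union_sdiff_self_eq_union]; exact mem_union_right _ hiΛ)
  funext r
  rw [mulVec_eq_colSub_mulVec A hx', Pi.add_apply, colSub_mulVec_apply, colSub_mulVec_apply,
    colSub_mulVec_apply, sum_union disjoint_sdiff]

end ColumnSubmatrix

section Pseudoinverse

variable {n N : ℕ} {A : Matrix (Fin n) (Fin N) ℝ} {Γ : Finset (Fin N)}
  (hG : IsUnit ((colSub A Γ)ᵀ * colSub A Γ))
include hG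

lemma pinv_mul_colSub : pinv A Γ * colSub A Γ = 1 := by
  rw [pinv, Matrix.mul_assoc]
  exact nonsing_inv_mul _ ((isUnit_iff_isUnit_det _).mp hG)

lemma one_sub_colSub_mul_pinv_mul_colSub : (1 - colSub A Γ * pinv A Γ) * colSub A Γ = 0 := by
  rw [Matrix.sub_mul, Matrix.one_mul, Matrix.mul_assoc, pinv_mul_colSub hG, Matrix.mul_one,
    sub_self]

lemma pinv_mulVec_eq_of_normal_eq {b : Fin n → ℝ} {y : ↥Γ → ℝ}
    (hy : (colSub A Γ)ᵀ *ᵥ (b - colSub A Γ *ᵥ y) = 0) : pinv A Γ *ᵥ b = y := by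
  have hnormal : (colSub A Γ)ᵀ *ᵥ b = ((colSub A Γ)ᵀ * colSub A Γ) *ᵥ y := by
    rw [← mulVec_mulVec, ← sub_eq_zero, ← mulVec_sub, hy]
  rw [pinv, ← mulVec_mulVec, hnormal, mulVec_mulVec,
    nonsing_inv_mul _ ((isUnit_iff_isUnit_det _).mp hG), one_mulVec]

lemma pinv_mulVec_colSub_mulVec_add (x : ↥Γ → ℝ) (v : Fin n → ℝ) :
    pinv A Γ *ᵥ (colSub A Γ *ᵥ x + v) = x + pinv A Γ *ᵥ v := by
  rw [mulVec_add, mulVec_mulVec, pinv_mul_colSub hG, one_mulVec]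

lemma one_sub_colSub_mul_pinv_mulVec_colSub_mulVec_add (x : ↥Γ → ℝ) (v : Fin n → ℝ) :
    (1 - colSub A Γ * pinv A Γ) *ᵥ (colSub A Γ *ᵥ x + v) =
      (1 - colSub A Γ * pinv A Γ) *ᵥ v := by
  rw [mulVec_add, mulVec_mulVec, one_sub_colSub_mul_pinv_mul_colSub hG, zero_mulVec, zero_add]

end Pseudoinverse

theorem stable_point_condition_noiseless_general {n N k : ℕ}
    (A : Matrix (Fin n) (Fin N) ℝ) (xstar : Fin N → ℝ)
    (Λ : Finset (Fin N)) (hΛ : ∀ i, xstar i ≠ 0 ↔ i ∈ Λ) (hΛcard : Λ.card = k)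
    (hinv : ∀ Γ : Finset (Fin N), Γ.card = k → IsUnit ((colSub A Γ)ᵀ * colSub A Γ))
    (αl : ℝ) (hαl : 0 < αl)
    (Γ : Finset (Fin N)) (hΓcard : Γ.card = k)
    (b : Fin n → ℝ) (hb : b = A.mulVec xstar)
    (xb : Fin N → ℝ) (hsupp : ∀ i ∉ Γ, xb i = 0)
    (hgrad : ∀ i ∈ Γ, (Aᵀ.mulVec (b - A.mulVec xb)) i = 0)
    (hmin : ∀ i ∈ Γ, ∀ j ∉ Γ, αl * |(Aᵀ.mulVec (b - A.mulVec xb)) j| ≤ |xb i|) :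
    euclNorm ((pinv A Γ * colSub A (Λ \ Γ)).mulVec fun j : ↥(Λ \ Γ) => xstar j.1)
      ≥ αl * euclNorm (((colSub A (Λ \ Γ))ᵀ * (1 - colSub A Γ * pinv A Γ)
            * colSub A (Λ \ Γ)).mulVec fun j : ↥(Λ \ Γ) => xstar j.1) := by
  have hG := hinv Γ hΓcard
  have hxstar : ∀ i ∉ Λ, xstar i = 0 := fun i hi => not_not.mp (mt (hΛ i).mp hi)
  have hb_split := hb.trans (mulVec_eq_colSub_add_colSub_sdiff (Γ := Γ) A hxstar)
  have hAxb := mulVec_eq_colSub_mulVec A hsupp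
  have hxb : pinv A Γ *ᵥ b = fun i : ↥Γ => xb i :=
    pinv_mulVec_eq_of_normal_eq hG (by
      rw [← hAxb, transpose_colSub_mulVec]; exact funext fun i => hgrad i i.2)
  have hu : (pinv A Γ * colSub A (Λ \ Γ)) *ᵥ (fun j : ↥(Λ \ Γ) => xstar j) =
      (fun i : ↥Γ => xb i) - fun i : ↥Γ => xstar i := by
    rw [← mulVec_mulVec, ← hxb, hb_split, pinv_mulVec_colSub_mulVec_add hG, add_sub_cancel_left]
  have hz : ((colSub A (Λ \ Γ))ᵀ * (1 - colSub A Γ * pinv A Γ) * colSub A (Λ \ Γ)).mulVec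
      (fun j : ↥(Λ \ Γ) => xstar j) = fun j : ↥(Λ \ Γ) => (Aᵀ *ᵥ (b - A *ᵥ xb)) j := by
    rw [← mulVec_mulVec, ← mulVec_mulVec, ← one_sub_colSub_mul_pinv_mulVec_colSub_mulVec_add hG,
      ← hb_split, sub_mulVec, one_mulVec, ← mulVec_mulVec, hxb, ← hAxb, transpose_colSub_mulVec]
  obtain ⟨f, hf, hfΛ⟩ := exists_injective_sdiff_not_mem (hΓcard.trans hΛcard.symm)
  rw [hu, hz, ge_iff_le]
  refine mul_euclNorm_le_of_injective hαl.le f hf fun j => ?_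
  rw [Pi.sub_apply, hxstar _ (hfΛ j), sub_zero]
  exact hmin _ (f j).2 _ (mem_sdiff.mp j.2).2

/-- stable point condition, noiseless case. -/
theorem stable_point_condition_noiseless {n N k : ℕ}
    (A : Matrix (Fin n) (Fin N) ℝ) (xstar : Fin N → ℝ)
    (Λ : Finset (Fin N)) (hΛ : ∀ i, xstar i ≠ 0 ↔ i ∈ Λ) (hΛcard : Λ.card = k)
    (hinv : ∀ Γ : Finset (Fin N), Γ.card = k → IsUnit ((colSub A Γ)ᵀ * colSub A Γ))
    (αl : ℝ) (hαl : 0 < αl)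
    (Γ : Finset (Fin N)) (hΓcard : Γ.card = k) (hne : Γ ≠ Λ)
    (b : Fin n → ℝ) (hb : b = A.mulVec xstar)
    (xb : Fin N → ℝ) (hsupp : ∀ i ∉ Γ, xb i = 0)
    (hgrad : ∀ i ∈ Γ, (Aᵀ.mulVec (b - A.mulVec xb)) i = 0)
    (hmin : ∀ i ∈ Γ, ∀ j ∉ Γ, αl * |(Aᵀ.mulVec (b - A.mulVec xb)) j| ≤ |xb i|) :
    euclNorm ((pinv A Γ * colSub A (Λ \ Γ)).mulVec fun j : ↥(Λ \ Γ) => xstar j.1)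
      ≥ αl * euclNorm (((colSub A (Λ \ Γ))ᵀ * (1 - colSub A Γ * pinv A Γ)
            * colSub A (Λ \ Γ)).mulVec fun j : ↥(Λ \ Γ) => xstar j.1) :=
  stable_point_condition_noiseless_general A xstar Λ hΛ hΛcard hinv αl hαl Γ hΓcard b hb xb hsupp
    hgrad hmin
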